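/- (Hubbard–Stratonovich transform.) Let J ∈ ℝ^{n×n} be symmetric, h ∈ ℝ^n, and let C ∈ ℝ^{n×n} be positive definite. Define the probability distribution ν on ℝ^n with density ν(z) ∝ exp(−½ zᵀCz + log Z_{J−C, Cz+h}) (which is integrable since C is positive definite). Then for every σ ∈ {±1}^n, μ_{J,h}(σ) = ∫_{ℝ^n} μ_{J−C, Cz+h}(σ) ν(z) dz, and moreover Cov(μ_{J,h}) ⪯ Cov(ν). -/

import Mathlib

open scoped Classical
open MeasureTheory

noncomputable section

/-! ### Spin systems -/

/-- The spin value of a Boolean. -/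
def spin (b : Bool) : ℝ := if b then 1 else -1

/-- A spin configuration as a vector in `ℝ^n`. -/
def toVec {n : ℕ} (σ : Fin n → Bool) (i : Fin n) : ℝ := spin (σ i)

/-- The (unnormalized) Ising weight `exp(½ σᵀJσ + ⟨h,σ⟩)`. -/
def isingWeight {n : ℕ} (J : Matrix (Fin n) (Fin n) ℝ) (h : Fin n → ℝ)
    (σ : Fin n → Bool) : ℝ :=
  Real.exp ((1 / 2) * ∑ i, ∑ j, toVec σ i * J i j * toVec σ j + ∑ i, h i * toVec σ i)

/-- The Ising partition function `Z_{J,h}`. -/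
def isingZ {n : ℕ} (J : Matrix (Fin n) (Fin n) ℝ) (h : Fin n → ℝ) : ℝ :=
  ∑ σ : Fin n → Bool, isingWeight J h σ

/-- The Ising model `μ_{J,h}` as a probability density on `{±1}^n`. -/
def ising {n : ℕ} (J : Matrix (Fin n) (Fin n) ℝ) (h : Fin n → ℝ)
    (σ : Fin n → Bool) : ℝ :=
  isingWeight J h σ / isingZ J h

/-- Flip the `i`-th spin. -/
def flipSpin {n : ℕ} (σ : Fin n → Bool) (i : Fin n) : Fin n → Bool :=
  Function.update σ i (!σ i)

/-- The Glauber dynamics transition kernel for a distribution `μ` on `{±1}^n`. -/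
def glauber {n : ℕ} (μ : (Fin n → Bool) → ℝ) (σ τ : Fin n → Bool) : ℝ :=
  (n : ℝ)⁻¹ * ∑ i : Fin n, (if τ = flipSpin σ i then μ τ / (μ σ + μ τ) else 0) +
    (if τ = σ then (n : ℝ)⁻¹ * ∑ i : Fin n, μ σ / (μ σ + μ (flipSpin σ i)) else 0)

/-! ### Markov chain mixing -/

/-- One step of a Markov chain applied to a distribution. -/
def stepDist {S : Type*} [Fintype S] (P : S → S → ℝ) (ν : S → ℝ) (τ : S) : ℝ :=
  ∑ σ : S, ν σ * P σ τ

/-- `t` steps of a Markov chain applied to a distribution. -/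
def iterDist {S : Type*} [Fintype S] (P : S → S → ℝ) (ν : S → ℝ) (t : ℕ) : S → ℝ :=
  (stepDist P)^[t] ν

/-- Total variation distance between two densities on a finite set. -/
def tvDist {S : Type*} [Fintype S] (μ ν : S → ℝ) : ℝ :=
  (1 / 2) * ∑ σ : S, |μ σ - ν σ|

/-- Mixing time `t_mix(P, ε) = max_x min {t ≥ 0 : d_TV(P^t δ_x, μ) < ε}`. -/
def mixingTime {S : Type*} [Fintype S] (P : S → S → ℝ) (μ : S → ℝ) (ε : ℝ) : ℕ :=
  ⨆ x : S, sInf {t : ℕ | tvDist (iterDist P (fun σ => if σ = x then 1 else 0) t) μ < ε}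

/-! ### Entropy, Dirichlet form, MLSI -/

/-- The entropy functional `Ent_μ[f]`. -/
def entFun {S : Type*} [Fintype S] (μ f : S → ℝ) : ℝ :=
  (∑ σ : S, μ σ * (f σ * Real.log (f σ))) -
    (∑ σ : S, μ σ * f σ) * Real.log (∑ σ : S, μ σ * f σ)

/-- The Dirichlet form `ℰ(f,g) = E_{x∼μ, y∼P_x}[(f(x)−f(y))(g(x)−g(y))]`. -/
def dirichletForm {S : Type*} [Fintype S] (μ : S → ℝ) (P : S → S → ℝ)
    (f g : S → ℝ) : ℝ :=
  ∑ σ : S, ∑ τ : S, μ σ * P σ τ * ((f σ - f τ) * (g σ - g τ))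

/-- The modified log-Sobolev constant of Glauber dynamics for `μ`:
the largest `C ≥ 0` such that `ℰ(f, log f) ≥ C · Ent_μ[f]` for all positive `f`. -/
def mlsi {n : ℕ} (μ : (Fin n → Bool) → ℝ) : ℝ :=
  sSup {C : ℝ | 0 ≤ C ∧ ∀ f : (Fin n → Bool) → ℝ, (∀ σ, 0 < f σ) →
    C * entFun μ f ≤ dirichletForm μ (glauber μ) f fun σ => Real.log (f σ)}

/-! ### Covariance and matrix norms -/

/-- Covariance matrix of a density on `{±1}^n`. -/
def covMat {n : ℕ} (μ : (Fin n → Bool) → ℝ) : Matrix (Fin n) (Fin n) ℝ :=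
  fun i j =>
    (∑ σ : Fin n → Bool, μ σ * (toVec σ i * toVec σ j)) -
      (∑ σ : Fin n → Bool, μ σ * toVec σ i) * (∑ σ : Fin n → Bool, μ σ * toVec σ j)

/-- The `ℓ² → ℓ²` operator norm of a real matrix. -/
def opNorm {m : Type*} [Fintype m] (M : Matrix m m ℝ) : ℝ :=
  sSup {r : ℝ | ∃ v : m → ℝ, (∑ i, v i ^ 2) = 1 ∧ r = Real.sqrt (∑ i, M.mulVec v i ^ 2)}

/-- `M_S`: zero out all rows and columns of `M` outside `S`. -/
def restrictMat {m : Type*} (M : Matrix m m ℝ) (S : Set m) : Matrix m m ℝ :=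
  fun i j => if i ∈ S ∧ j ∈ S then M i j else 0

/-- `I_S`: the diagonal 0/1 matrix with ones exactly on `S`. -/
def diagIndicator {m : Type*} (S : Set m) : Matrix m m ℝ :=
  fun i j => if i = j ∧ i ∈ S then 1 else 0

/-! ### Graphs -/

/-- The ball of radius `r` around `u` in a graph. -/
def gball {V : Type*} (G : SimpleGraph V) (u : V) (r : ℕ) : Set V :=
  {v | G.Reachable u v ∧ G.dist u v ≤ r}

/-- Growth condition (i) of `(Δ,D)`-pseudorandomness. -/
def PseudorandomBalls {V : Type*} (H : SimpleGraph V) (Δ D : ℝ) : Prop :=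
  ∀ u ∈ H.support, ∀ r : ℕ, 1 ≤ r → ((gball H u r).ncard : ℝ) ≤ Δ * D ^ (r - 1)

/-- `(Δ,D)`-pseudorandomness with respect to a set `S` of vertices. -/
def PseudorandomWrt {V : Type*} (H : SimpleGraph V) (S : Set V) (Δ D : ℝ) : Prop :=
  PseudorandomBalls H Δ D ∧
    ∀ u ∈ H.support, ∀ r : ℕ, ((S ∩ gball H u r).ncard : ℝ) ≤ D ^ r

/-- A near-forest: every connected component has tree-excess at most 1,
i.e. at most as many edges as vertices. -/
def NearForest {V : Type*} (H : SimpleGraph V) : Prop :=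
  ∀ v : V,
    ({e ∈ H.edgeSet | ∀ w ∈ e, H.Reachable v w}).ncard ≤
      ((H.connectedComponentMk v).supp).ncard

/-- The real adjacency matrix of a simple graph. -/
def adjMatrixOf {V : Type*} (G : SimpleGraph V) : Matrix V V ℝ :=
  fun i j => if G.Adj i j then 1 else 0

/-! ### Random graph models -/

/-- Unordered pairs of distinct vertices of `[n]`, as ordered pairs `(i,j)` with `i < j`. -/
abbrev Pairs (n : ℕ) := {p : Fin n × Fin n // p.1 < p.2}

/-- The SBM edge probability given the two community memberships. -/
def edgeProb (d lam : ℝ) (n : ℕ) (a b : Bool) : ℝ :=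
  if a = b then (d + lam * Real.sqrt d) / n else (d - lam * Real.sqrt d) / n

/-- PMF of the stochastic block model `SBM(n,d,λ)`:
a uniformly random community vector together with independent edges. -/
def sbmPMF (d lam : ℝ) (n : ℕ) (x : (Fin n → Bool) × (Pairs n → Bool)) : ℝ :=
  (1 / 2 ^ n) * ∏ p : Pairs n,
    (if x.2 p then edgeProb d lam n (x.1 p.1.1) (x.1 p.1.2)
     else 1 - edgeProb d lam n (x.1 p.1.1) (x.1 p.1.2))

/-- PMF of `SBM(n,d,λ)` conditioned on the community vector `σv`. -/
def sbmCondPMF (d lam : ℝ) (n : ℕ) (σv : Fin n → Bool) (ω : Pairs n → Bool) : ℝ :=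
  ∏ p : Pairs n,
    (if ω p then edgeProb d lam n (σv p.1.1) (σv p.1.2)
     else 1 - edgeProb d lam n (σv p.1.1) (σv p.1.2))

/-- PMF of `SBM(n,d,λ)` together with independent uniformly random edge signs. -/
def sbmSignPMF (d lam : ℝ) (n : ℕ)
    (x : ((Fin n → Bool) × (Pairs n → Bool)) × (Pairs n → Bool)) : ℝ :=
  sbmPMF d lam n x.1 * (1 / 2) ^ Fintype.card (Pairs n)

/-- Probability of an event for a PMF on a finite sample space. -/
def prob {Ω : Type*} [Fintype Ω] (pmf : Ω → ℝ) (E : Set Ω) : ℝ :=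
  ∑ x : Ω, if x ∈ E then pmf x else 0

/-- The graph on `[n]` determined by edge indicators. -/
def graphOf {n : ℕ} (ω : Pairs n → Bool) : SimpleGraph (Fin n) :=
  SimpleGraph.fromRel fun i j => ∃ h : i < j, ω ⟨(i, j), h⟩ = true

/-- The real adjacency matrix of the graph given by edge indicators. -/
def adjMatOf {n : ℕ} (ω : Pairs n → Bool) : Matrix (Fin n) (Fin n) ℝ :=
  fun i j =>
    if h : i < j then (if ω ⟨(i, j), h⟩ then 1 else 0)
    else if h : j < i then (if ω ⟨(j, i), h⟩ then 1 else 0) else 0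

/-- The real value of a Boolean sign. -/
def signVal (c : Bool) : ℝ := if c then 1 else -1

/-- The signed adjacency matrix: entry `c(uv) ∈ {±1}` on edges, `0` elsewhere. -/
def signedAdjMat {n : ℕ} (ω c : Pairs n → Bool) : Matrix (Fin n) (Fin n) ℝ :=
  fun i j =>
    if h : i < j then (if ω ⟨(i, j), h⟩ then signVal (c ⟨(i, j), h⟩) else 0)
    else if h : j < i then (if ω ⟨(j, i), h⟩ then signVal (c ⟨(j, i), h⟩) else 0) else 0

/-- Conditional expectation `E[A_G | σ]` of the adjacency matrix given communities. -/
def expAdj (d lam : ℝ) (n : ℕ) (σv : Fin n → Bool) : Matrix (Fin n) (Fin n) ℝ :=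
  fun i j => if i = j then 0 else edgeProb d lam n (σv i) (σv j)

/-- Probability of a single entry of the randomly signed Erdős–Rényi matrix. -/
def erPairProb (d : ℝ) (n : ℕ) : Option Bool → ℝ
  | none => 1 - d / n
  | some _ => d / (2 * n)

/-- PMF of the randomly signed Erdős–Rényi interaction matrix:
independently for each pair, `0` w.p. `1 − d/n` and `±1` each w.p. `d/(2n)`. -/
def erSignPMF (d : ℝ) (n : ℕ) (ω : Pairs n → Option Bool) : ℝ :=
  ∏ p : Pairs n, erPairProb d n (ω p)

/-- The value in `{0, ±1}` of an optional sign. -/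
def optVal : Option Bool → ℝ
  | none => 0
  | some true => 1
  | some false => -1

/-- The randomly signed Erdős–Rényi matrix determined by the sample `ω`. -/
def erSignMat {n : ℕ} (ω : Pairs n → Option Bool) : Matrix (Fin n) (Fin n) ℝ :=
  fun i j =>
    if h : i < j then optVal (ω ⟨(i, j), h⟩)
    else if h : j < i then optVal (ω ⟨(j, i), h⟩) else 0

/-! ### Excision -/

/-- `ℓ(v)`: the smallest `ℓ` such that `|B_L(v)| ≤ (d(1+ε))^L` for every `L ≥ ℓ`. -/
def heavyRadius {n : ℕ} (G : SimpleGraph (Fin n)) (d ε : ℝ) (v : Fin n) : ℕ :=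
  sInf {ℓ : ℕ | ∀ L : ℕ, ℓ ≤ L → ((gball G v L).ncard : ℝ) ≤ (d * (1 + ε)) ^ L}

/-- The excision of `G`: the union over all vertices `v` of the induced subgraphs
on the balls `B_{ℓ(v)}(v)`. -/
def excision {n : ℕ} (G : SimpleGraph (Fin n)) (d ε : ℝ) : SimpleGraph (Fin n) where
  Adj u v := G.Adj u v ∧ ∃ w : Fin n,
    u ∈ gball G w (heavyRadius G d ε w) ∧ v ∈ gball G w (heavyRadius G d ε w)
  symm := by
    constructor
    rintro u v ⟨ha, w, hu, hv⟩
    exact ⟨ha.symm, w, hv, hu⟩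
  loopless := by
    constructor
    rintro u ⟨ha, -⟩
    exact G.irrefl ha

end
noncomputable section

/-- Unnormalized Hubbard–Stratonovich density `exp(−½ zᵀCz + log Z_{J−C, Cz+h})`. -/
def hsWeight {n : ℕ} (J C : Matrix (Fin n) (Fin n) ℝ) (h : Fin n → ℝ)
    (z : Fin n → ℝ) : ℝ :=
  Real.exp (-(1 / 2) * ∑ i, ∑ j, z i * C i j * z j +
    Real.log (isingZ (J - C) (C.mulVec z + h)))

/-- The Hubbard–Stratonovich mixing density `ν` (normalized). -/
def hsDensity {n : ℕ} (J C : Matrix (Fin n) (Fin n) ℝ) (h : Fin n → ℝ)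
    (z : Fin n → ℝ) : ℝ :=
  hsWeight J C h z / ∫ w : Fin n → ℝ, hsWeight J C h w

/-- Covariance matrix of a density `ν` on `ℝ^n`. -/
def covDens {n : ℕ} (ν : (Fin n → ℝ) → ℝ) : Matrix (Fin n) (Fin n) ℝ :=
  fun i j =>
    (∫ z : Fin n → ℝ, ν z * (z i * z j)) -
      (∫ z : Fin n → ℝ, ν z * z i) * (∫ z : Fin n → ℝ, ν z * z j)

noncomputable section
namespace HSaux

open MeasureTheory Real

variable {n : ℕ}

/-- The quadratic form of a matrix. -/
def Q (C : Matrix (Fin n) (Fin n) ℝ) (z : Fin n → ℝ) : ℝ := ∑ i, ∑ j, z i * C i j * z j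

/-- The centered Gaussian weight. -/
def g (C : Matrix (Fin n) (Fin n) ℝ) (z : Fin n → ℝ) : ℝ := Real.exp (-(1 / 2) * Q C z)

lemma contQ (C : Matrix (Fin n) (Fin n) ℝ) : Continuous (Q C) :=
  continuous_finset_sum _ fun i _ => continuous_finset_sum _ fun j _ =>
    ((continuous_apply i).mul continuous_const).mul (continuous_apply j)

lemma contg (C : Matrix (Fin n) (Fin n) ℝ) : Continuous (g C) :=
  Real.continuous_exp.comp (continuous_const.mul (contQ C))

lemma g_pos (C : Matrix (Fin n) (Fin n) ℝ) (z : Fin n → ℝ) : 0 < g C z := Real.exp_pos _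

lemma Q_eq_dot (C : Matrix (Fin n) (Fin n) ℝ) (z : Fin n → ℝ) :
    Q C z = dotProduct z (C.mulVec z) := by
  simp only [Q, dotProduct, Matrix.mulVec, Finset.mul_sum]
  exact Finset.sum_congr rfl fun i _ => Finset.sum_congr rfl fun j _ => by ring

lemma Q_smul (C : Matrix (Fin n) (Fin n) ℝ) (t : ℝ) (z : Fin n → ℝ) :
    Q C (t • z) = t ^ 2 * Q C z := by
  simp only [Q, Pi.smul_apply, smul_eq_mul, Finset.mul_sum]
  exact Finset.sum_congr rfl fun i _ => Finset.sum_congr rfl fun j _ => by ring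

lemma Q_pos {C : Matrix (Fin n) (Fin n) ℝ} (hC : C.PosDef) {z : Fin n → ℝ} (hz : z ≠ 0) :
    0 < Q C z := by
  rw [Q_eq_dot]
  simpa using hC.dotProduct_mulVec_pos hz

/-- Coercivity of a positive definite quadratic form. -/
lemma coercive {C : Matrix (Fin n) (Fin n) ℝ} (hC : C.PosDef) :
    ∃ c : ℝ, 0 < c ∧ ∀ z : Fin n → ℝ, c * ∑ i, (z i) ^ 2 ≤ Q C z := by
  rcases Nat.eq_zero_or_pos n with hn | hn
  · refine ⟨1, one_pos, fun z => ?_⟩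
    subst hn
    simp [Q]
  · have hne : Nonempty (Fin n) := ⟨⟨0, hn⟩⟩
    -- the unit sphere (sup norm) is compact and nonempty
    have hsph : ((fun _ => 1 : Fin n → ℝ)) ∈ Metric.sphere (0 : Fin n → ℝ) 1 := by
      simp [Metric.mem_sphere, dist_eq_norm, pi_norm_const]
    obtain ⟨u, hu, hmin⟩ := (isCompact_sphere (0 : Fin n → ℝ) 1).exists_isMinOn
      ⟨_, hsph⟩ (contQ C).continuousOn
    have hunorm : ‖u‖ = 1 := by simpa [dist_eq_norm] using hu
    have hune : u ≠ 0 := fun h => by simp [h] at hunorm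
    have hc0 : 0 < Q C u := Q_pos hC hune
    refine ⟨Q C u / n, by positivity, fun z => ?_⟩
    rcases eq_or_ne z 0 with rfl | hz
    · simp [Q]
    · have ht : 0 < ‖z‖ := norm_pos_iff.2 hz
      have humem : ‖z‖⁻¹ • z ∈ Metric.sphere (0 : Fin n → ℝ) 1 := by
        simp [norm_smul, abs_of_pos (inv_pos.2 ht), inv_mul_cancel₀ ht.ne']
      have h1 : Q C u ≤ Q C (‖z‖⁻¹ • z) := hmin humem
      rw [Q_smul] at h1
      have h2 : Q C u * ‖z‖ ^ 2 ≤ Q C z := by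
        have h3 : (‖z‖⁻¹) ^ 2 * Q C z * ‖z‖ ^ 2 = Q C z := by
          field_simp
        nlinarith [sq_nonneg ‖z‖]
      have h4 : ∑ i, (z i) ^ 2 ≤ n * ‖z‖ ^ 2 := by
        calc ∑ i, (z i) ^ 2 ≤ ∑ _i : Fin n, ‖z‖ ^ 2 := by
              refine Finset.sum_le_sum fun i _ => ?_
              have := norm_le_pi_norm z i
              have h0 : (0:ℝ) ≤ ‖z i‖ := norm_nonneg _
              calc (z i) ^ 2 = ‖z i‖ ^ 2 := by simp [Real.norm_eq_abs, sq_abs]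
                _ ≤ ‖z‖ ^ 2 := by nlinarith
          _ = n * ‖z‖ ^ 2 := by simp [Finset.sum_const, Finset.card_univ]
      rw [div_mul_eq_mul_div, div_le_iff₀ (by exact_mod_cast hn)]
      calc Q C u * ∑ i, (z i) ^ 2 ≤ Q C u * (n * ‖z‖ ^ 2) := by nlinarith
        _ = (Q C u * ‖z‖ ^ 2) * n := by ring
        _ ≤ Q C z * n := by
            have hn' : (0:ℝ) ≤ n := Nat.cast_nonneg n
            nlinarith

/-- Real Gaussian integrability on pi space. -/
lemma integrable_gauss {b : ℝ} (hb : 0 < b) :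
    Integrable (fun v : Fin n → ℝ => Real.exp (-b * ∑ i, (v i) ^ 2)) := by
  have h := (GaussianFourier.integrable_cexp_neg_mul_sum_add (b := (b : ℂ)) (by simpa using hb)
    (fun _ : Fin n => (0 : ℂ))).norm
  refine h.congr (Filter.Eventually.of_forall fun v => ?_)
  have hz : (-(b:ℂ) * ∑ i, ((v i : ℂ)) ^ 2 + ∑ i : Fin n, (0:ℂ) * (v i : ℂ))
      = ((-b * ∑ i, (v i) ^ 2 : ℝ) : ℂ) := by push_cast; simp
  simp only [hz, Complex.norm_exp, Complex.ofReal_re]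

/-- Master integrability lemma: continuous functions with quadratic growth
times the Gaussian weight are integrable. -/
lemma integrable_poly_g {C : Matrix (Fin n) (Fin n) ℝ} (hC : C.PosDef)
    {f : (Fin n → ℝ) → ℝ} (hfc : Continuous f)
    (hf : ∀ z, |f z| ≤ 1 + ∑ i, (z i) ^ 2) :
    Integrable (fun z => f z * g C z) := by
  obtain ⟨c, hc, hcoer⟩ := coercive hC
  set a := c / 2 with ha
  have haa : 0 < a := by positivity
  refine Integrable.mono' ((integrable_gauss (show 0 < a / 2 by positivity)).const_mul
    (1 + 2 / a)) (hfc.mul (contg C)).aestronglyMeasurable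
    (Filter.Eventually.of_forall fun z => ?_)
  set r := ∑ i, (z i) ^ 2 with hr
  have hr0 : 0 ≤ r := Finset.sum_nonneg fun i _ => sq_nonneg _
  have h1 : g C z ≤ Real.exp (-(a * r)) := by
    rw [g, Real.exp_le_exp]
    have := hcoer z
    rw [ha]
    nlinarith
  have h2 : 1 + r ≤ (1 + 2 / a) * Real.exp (a / 2 * r) := by
    have h3 := Real.add_one_le_exp (a / 2 * r)
    have hex : 1 ≤ Real.exp (a / 2 * r) := Real.one_le_exp (by positivity)
    have h4 : r ≤ 2 / a * Real.exp (a / 2 * r) := by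
      rw [div_mul_eq_mul_div, le_div_iff₀ haa]
      nlinarith
    nlinarith
  have h5 : ‖f z * g C z‖ = |f z| * g C z := by
    rw [norm_mul, Real.norm_eq_abs, Real.norm_eq_abs, abs_of_pos (g_pos C z)]
  rw [h5]
  calc |f z| * g C z ≤ (1 + r) * Real.exp (-(a * r)) := by
        have := hf z
        have := (Real.exp_pos (-(a * r))).le
        nlinarith [g_pos C z]
    _ ≤ ((1 + 2 / a) * Real.exp (a / 2 * r)) * Real.exp (-(a * r)) := by
        nlinarith [Real.exp_pos (-(a * r))]
    _ = (1 + 2 / a) * Real.exp (-(a / 2) * r) := by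
        rw [mul_assoc, ← Real.exp_add]
        ring_nf
  
end HSaux
end

noncomputable section
namespace HSaux

open MeasureTheory Real

variable {n : ℕ} {C : Matrix (Fin n) (Fin n) ℝ}

lemma sq_le_sum (z : Fin n → ℝ) (i : Fin n) : (z i) ^ 2 ≤ ∑ k, (z k) ^ 2 :=
  Finset.single_le_sum (fun k _ => sq_nonneg (z k)) (Finset.mem_univ i)

lemma ig (hC : C.PosDef) : Integrable (g C) := by
  have := integrable_poly_g hC (f := fun _ => (1 : ℝ)) continuous_const
    (fun z => by
      have : (0:ℝ) ≤ ∑ i, (z i) ^ 2 := Finset.sum_nonneg fun i _ => sq_nonneg _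
      simp; linarith)
  simpa using this

lemma ig1 (hC : C.PosDef) (i : Fin n) : Integrable (fun z => z i * g C z) := by
  refine integrable_poly_g hC (continuous_apply i) fun z => ?_
  have h1 := sq_le_sum z i
  nlinarith [abs_nonneg (z i), sq_abs (z i), sq_nonneg (|z i| - 1)]

lemma ig2 (hC : C.PosDef) (i j : Fin n) : Integrable (fun z => z i * z j * g C z) := by
  refine integrable_poly_g hC ((continuous_apply i).mul (continuous_apply j)) fun z => ?_
  have h1 := sq_le_sum z i
  have h2 := sq_le_sum z j
  have h3 : |z i * z j| = |z i| * |z j| := abs_mul _ _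
  nlinarith [sq_abs (z i), sq_abs (z j), sq_nonneg (|z i| - |z j|), abs_nonneg (z i),
    abs_nonneg (z j)]

lemma gneg (C : Matrix (Fin n) (Fin n) ℝ) (z : Fin n → ℝ) : g C (-z) = g C z := by
  unfold g Q
  congr 2
  exact Finset.sum_congr rfl fun i _ => Finset.sum_congr rfl fun j _ => by
    simp only [Pi.neg_apply]; ring

lemma odd1 (hC : C.PosDef) (i : Fin n) : ∫ z : Fin n → ℝ, z i * g C z = 0 := by
  have h := integral_neg_eq_self (fun z : Fin n → ℝ => z i * g C z) volume
  simp only [Pi.neg_apply, gneg, neg_mul] at h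
  rw [integral_neg] at h
  linarith

/-- Integral of the Gaussian weight is positive. -/
lemma K_pos (hC : C.PosDef) : 0 < ∫ z : Fin n → ℝ, g C z := by
  rw [integral_pos_iff_support_of_nonneg (fun z => (g_pos C z).le) (ig hC)]
  have : Function.support (g C) = Set.univ :=
    Set.eq_univ_of_forall fun z => (g_pos C z).ne'
  rw [this]
  exact isOpen_univ.measure_pos volume Set.univ_nonempty

/-- Shifted zeroth moment. -/
lemma shift0 (hC : C.PosDef) (a : Fin n → ℝ) :
    Integrable (fun z : Fin n → ℝ => g C (z - a)) ∧
      ∫ z : Fin n → ℝ, g C (z - a) = ∫ z : Fin n → ℝ, g C z := by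
  exact ⟨(ig hC).comp_sub_right a, integral_sub_right_eq_self (g C) a⟩

/-- Shifted first moment. -/
lemma shift1 (hC : C.PosDef) (a : Fin n → ℝ) (i : Fin n) :
    Integrable (fun z : Fin n → ℝ => z i * g C (z - a)) ∧
      ∫ z : Fin n → ℝ, z i * g C (z - a) = a i * ∫ z : Fin n → ℝ, g C z := by
  have hF : Integrable (fun y : Fin n → ℝ => (y i + a i) * g C y) := by
    have h := (ig1 hC i).add ((ig hC).const_mul (a i))
    refine h.congr (Filter.Eventually.of_forall fun y => ?_)
    simp; ring
  have hFe : (fun z : Fin n → ℝ => z i * g C (z - a))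
      = fun z => (fun y => (y i + a i) * g C y) (z - a) := by
    funext z
    simp [Pi.sub_apply, sub_add_cancel]
  constructor
  · rw [hFe]; exact hF.comp_sub_right a
  · rw [hFe, integral_sub_right_eq_self (fun y : Fin n → ℝ => (y i + a i) * g C y) a]
    have : ∀ y : Fin n → ℝ, (y i + a i) * g C y = y i * g C y + a i * g C y := fun y => by ring
    rw [integral_congr_ae (Filter.Eventually.of_forall this),
      integral_add (ig1 hC i) ((ig hC).const_mul (a i)), odd1 hC i, integral_const_mul]
    ring

/-- Shifted second moment. -/
lemma shift2 (hC : C.PosDef) (a : Fin n → ℝ) (i j : Fin n) :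
    Integrable (fun z : Fin n → ℝ => z i * z j * g C (z - a)) ∧
      ∫ z : Fin n → ℝ, z i * z j * g C (z - a) =
        a i * a j * (∫ z : Fin n → ℝ, g C z) + ∫ z : Fin n → ℝ, z i * z j * g C z := by
  have hF : Integrable (fun y : Fin n → ℝ => (y i + a i) * (y j + a j) * g C y) := by
    have h := (((ig2 hC i j).add ((ig1 hC i).const_mul (a j))).add
      ((ig1 hC j).const_mul (a i))).add ((ig hC).const_mul (a i * a j))
    refine h.congr (Filter.Eventually.of_forall fun y => ?_)
    simp; ring
  have hFe : (fun z : Fin n → ℝ => z i * z j * g C (z - a))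
      = fun z => (fun y => (y i + a i) * (y j + a j) * g C y) (z - a) := by
    funext z
    simp [Pi.sub_apply, sub_add_cancel]
  constructor
  · rw [hFe]; exact hF.comp_sub_right a
  · rw [hFe, integral_sub_right_eq_self
      (fun y : Fin n → ℝ => (y i + a i) * (y j + a j) * g C y) a]
    have heq : ∀ y : Fin n → ℝ, (y i + a i) * (y j + a j) * g C y
        = (y i * y j * g C y + a j * (y i * g C y))
          + (a i * (y j * g C y) + (a i * a j) * g C y) := fun y => by ring
    have hP : Integrable (fun y : Fin n → ℝ => y i * y j * g C y + a j * (y i * g C y)) :=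
      (ig2 hC i j).add ((ig1 hC i).const_mul (a j))
    have hQ : Integrable (fun y : Fin n → ℝ => a i * (y j * g C y) + (a i * a j) * g C y) :=
      ((ig1 hC j).const_mul (a i)).add ((ig hC).const_mul (a i * a j))
    rw [integral_congr_ae (Filter.Eventually.of_forall heq), integral_add hP hQ,
      integral_add (ig2 hC i j) ((ig1 hC i).const_mul (a j)),
      integral_add ((ig1 hC j).const_mul (a i)) ((ig hC).const_mul (a i * a j)),
      integral_const_mul, integral_const_mul, integral_const_mul, odd1 hC i, odd1 hC j]
    ring

end HSaux
end

noncomputable section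
namespace HSaux

open MeasureTheory Real

variable {n : ℕ} {C : Matrix (Fin n) (Fin n) ℝ}

lemma isingZ_pos (J : Matrix (Fin n) (Fin n) ℝ) (h : Fin n → ℝ) : 0 < isingZ J h :=
  Finset.sum_pos (fun σ _ => Real.exp_pos _) Finset.univ_nonempty

lemma Csymm (hC : C.PosDef) (i j : Fin n) : C i j = C j i := by
  have h := hC.1
  have := congrFun (congrFun h j) i
  simpa [Matrix.conjTranspose_apply] using this

lemma Qexpand (hC : C.PosDef) (z a : Fin n → ℝ) :
    Q C (z - a) = Q C z - 2 * (∑ i, (∑ j, C i j * z j) * a i) + Q C a := by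
  have key : ∑ i, ∑ j, z i * C i j * a j = ∑ i, ∑ j, a i * C i j * z j := by
    rw [Finset.sum_comm]
    exact Finset.sum_congr rfl fun j _ => Finset.sum_congr rfl fun i _ => by
      rw [Csymm hC i j]; ring
  have key2 : ∑ i, (∑ j, C i j * z j) * a i = ∑ i, ∑ j, a i * C i j * z j := by
    refine Finset.sum_congr rfl fun i _ => ?_
    rw [Finset.sum_mul]
    exact Finset.sum_congr rfl fun j _ => by ring
  have expand : ∀ i, ∑ j, (z - a) i * C i j * (z - a) j
      = ((∑ j, z i * C i j * z j) - (∑ j, z i * C i j * a j))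
        - ((∑ j, a i * C i j * z j) - ∑ j, a i * C i j * a j) := by
    intro i
    rw [← Finset.sum_sub_distrib, ← Finset.sum_sub_distrib, ← Finset.sum_sub_distrib]
    exact Finset.sum_congr rfl fun j _ => by simp only [Pi.sub_apply]; ring
  unfold Q
  rw [Finset.sum_congr rfl fun i _ => expand i,
    Finset.sum_sub_distrib, Finset.sum_sub_distrib, Finset.sum_sub_distrib, key, key2]
  ring

/-- The key Hubbard–Stratonovich pointwise identity. -/
lemma weight_id (hC : C.PosDef) (J : Matrix (Fin n) (Fin n) ℝ) (h : Fin n → ℝ)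
    (σ : Fin n → Bool) (z : Fin n → ℝ) :
    isingWeight (J - C) (C.mulVec z + h) σ * g C z
      = isingWeight J h σ * g C (z - toVec σ) := by
  unfold isingWeight g
  rw [← Real.exp_add, ← Real.exp_add]
  congr 1
  rw [Qexpand hC z (toVec σ)]
  have e1 : ∑ i, ∑ j, toVec σ i * (J - C) i j * toVec σ j
      = (∑ i, ∑ j, toVec σ i * J i j * toVec σ j) - Q C (toVec σ) := by
    unfold Q
    rw [← Finset.sum_sub_distrib]
    refine Finset.sum_congr rfl fun i _ => ?_
    rw [← Finset.sum_sub_distrib]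
    exact Finset.sum_congr rfl fun j _ => by simp only [Matrix.sub_apply]; ring
  have e2 : ∑ i, (C.mulVec z + h) i * toVec σ i
      = (∑ i, (∑ j, C i j * z j) * toVec σ i) + ∑ i, h i * toVec σ i := by
    rw [← Finset.sum_add_distrib]
    refine Finset.sum_congr rfl fun i _ => ?_
    simp only [Pi.add_apply, Matrix.mulVec, dotProduct]
    ring
  rw [e1, e2]
  ring

/-- Decomposition of the HS weight as a mixture of shifted Gaussians. -/
lemma hsWeight_eq (hC : C.PosDef) (J : Matrix (Fin n) (Fin n) ℝ) (h : Fin n → ℝ)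
    (z : Fin n → ℝ) :
    hsWeight J C h z = ∑ σ : Fin n → Bool, isingWeight J h σ * g C (z - toVec σ) := by
  have h1 : hsWeight J C h z = g C z * isingZ (J - C) (C.mulVec z + h) := by
    unfold hsWeight g Q
    rw [Real.exp_add, Real.exp_log (isingZ_pos _ _)]
  rw [h1]
  unfold isingZ
  rw [Finset.mul_sum]
  exact Finset.sum_congr rfl fun σ _ => by rw [mul_comm, weight_id hC J h σ z]

end HSaux
end

noncomputable section
namespace HSaux

open MeasureTheory Real

variable {n : ℕ} {C : Matrix (Fin n) (Fin n) ℝ}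

lemma hsWeight_gz (J : Matrix (Fin n) (Fin n) ℝ) (h : Fin n → ℝ) (z : Fin n → ℝ) :
    hsWeight J C h z = g C z * isingZ (J - C) (C.mulVec z + h) := by
  unfold hsWeight g Q
  rw [Real.exp_add, Real.exp_log (isingZ_pos _ _)]

lemma hsWeight_integrable (hC : C.PosDef) (J : Matrix (Fin n) (Fin n) ℝ) (h : Fin n → ℝ) :
    Integrable (hsWeight J C h) := by
  rw [show hsWeight J C h = fun z => ∑ σ : Fin n → Bool, isingWeight J h σ * g C (z - toVec σ)
    from funext (hsWeight_eq hC J h)]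
  exact integrable_finset_sum _ fun σ _ => ((shift0 hC (toVec σ)).1).const_mul _

lemma hsWeight_integral (hC : C.PosDef) (J : Matrix (Fin n) (Fin n) ℝ) (h : Fin n → ℝ) :
    ∫ z : Fin n → ℝ, hsWeight J C h z = isingZ J h * ∫ z : Fin n → ℝ, g C z := by
  rw [integral_congr_ae (Filter.Eventually.of_forall (hsWeight_eq hC J h)),
    integral_finset_sum _ (fun σ _ => ((shift0 hC (toVec σ)).1).const_mul _)]
  unfold isingZ
  rw [Finset.sum_mul]
  exact Finset.sum_congr rfl fun σ _ => by
    rw [integral_const_mul, (shift0 hC (toVec σ)).2]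

lemma hsWeight_mom1 (hC : C.PosDef) (J : Matrix (Fin n) (Fin n) ℝ) (h : Fin n → ℝ)
    (i : Fin n) :
    ∫ z : Fin n → ℝ, hsWeight J C h z * z i
      = (∑ σ : Fin n → Bool, isingWeight J h σ * toVec σ i) * ∫ z : Fin n → ℝ, g C z := by
  have he : ∀ z : Fin n → ℝ, hsWeight J C h z * z i
      = ∑ σ : Fin n → Bool, isingWeight J h σ * (z i * g C (z - toVec σ)) := by
    intro z
    rw [hsWeight_eq hC J h z, Finset.sum_mul]
    exact Finset.sum_congr rfl fun σ _ => by ring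
  rw [integral_congr_ae (Filter.Eventually.of_forall he),
    integral_finset_sum _ (fun σ _ => ((shift1 hC (toVec σ) i).1).const_mul _),
    Finset.sum_mul]
  exact Finset.sum_congr rfl fun σ _ => by
    rw [integral_const_mul, (shift1 hC (toVec σ) i).2]
    ring

lemma hsWeight_mom2 (hC : C.PosDef) (J : Matrix (Fin n) (Fin n) ℝ) (h : Fin n → ℝ)
    (i j : Fin n) :
    ∫ z : Fin n → ℝ, hsWeight J C h z * (z i * z j)
      = (∑ σ : Fin n → Bool, isingWeight J h σ * (toVec σ i * toVec σ j))
          * (∫ z : Fin n → ℝ, g C z)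
        + isingZ J h * ∫ z : Fin n → ℝ, z i * z j * g C z := by
  have he : ∀ z : Fin n → ℝ, hsWeight J C h z * (z i * z j)
      = ∑ σ : Fin n → Bool, isingWeight J h σ * (z i * z j * g C (z - toVec σ)) := by
    intro z
    rw [hsWeight_eq hC J h z, Finset.sum_mul]
    exact Finset.sum_congr rfl fun σ _ => by ring
  rw [integral_congr_ae (Filter.Eventually.of_forall he),
    integral_finset_sum _ (fun σ _ => ((shift2 hC (toVec σ) i j).1).const_mul _)]
  have : ∀ σ : Fin n → Bool,
      ∫ z : Fin n → ℝ, isingWeight J h σ * (z i * z j * g C (z - toVec σ))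
        = isingWeight J h σ * (toVec σ i * toVec σ j) * (∫ z : Fin n → ℝ, g C z)
          + isingWeight J h σ * ∫ z : Fin n → ℝ, z i * z j * g C z := by
    intro σ
    rw [integral_const_mul, (shift2 hC (toVec σ) i j).2]
    ring
  rw [Finset.sum_congr rfl fun σ _ => this σ, Finset.sum_add_distrib,
    ← Finset.sum_mul, ← Finset.sum_mul]
  rfl

lemma Mpsd (hC : C.PosDef) (x : Fin n → ℝ) :
    0 ≤ ∑ i, ∑ j, x i * (∫ z : Fin n → ℝ, z i * z j * g C z) * x j := by
  have step : ∀ i j : Fin n, x i * (∫ z : Fin n → ℝ, z i * z j * g C z) * x j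
      = ∫ z : Fin n → ℝ, (x i * x j) * (z i * z j * g C z) := fun i j => by
    rw [integral_const_mul]; ring
  have hx : ∀ z : Fin n → ℝ, (∑ i, x i * z i) ^ 2 * g C z
      = ∑ i, ∑ j, (x i * x j) * (z i * z j * g C z) := by
    intro z
    rw [sq, Finset.sum_mul_sum, Finset.sum_mul]
    refine Finset.sum_congr rfl fun i _ => ?_
    rw [Finset.sum_mul]
    exact Finset.sum_congr rfl fun j _ => by ring
  calc (0:ℝ) ≤ ∫ z : Fin n → ℝ, (∑ i, x i * z i) ^ 2 * g C z :=
        integral_nonneg fun z => mul_nonneg (sq_nonneg _) (g_pos C z).le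
    _ = ∑ i, ∑ j, x i * (∫ z : Fin n → ℝ, z i * z j * g C z) * x j := by
        rw [integral_congr_ae (Filter.Eventually.of_forall hx),
          integral_finset_sum _ (fun i _ =>
            integrable_finset_sum _ fun j _ => (ig2 hC i j).const_mul _)]
        refine Finset.sum_congr rfl fun i _ => ?_
        rw [integral_finset_sum _ (fun j _ => (ig2 hC i j).const_mul _)]
        exact Finset.sum_congr rfl fun j _ => (step i j).symm

lemma Msymm (C : Matrix (Fin n) (Fin n) ℝ) (i j : Fin n) :
    (∫ z : Fin n → ℝ, z i * z j * g C z) = ∫ z : Fin n → ℝ, z j * z i * g C z :=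
  integral_congr_ae (Filter.Eventually.of_forall fun z => by ring)

end HSaux
end

/-- Hubbard–Stratonovich transform. For positive definite `C`,
`μ_{J,h} = E_{z∼ν} μ_{J−C,Cz+h}` where `ν(z) ∝ exp(−½ zᵀCz + log Z_{J−C,Cz+h})`,
and `Cov(μ_{J,h}) ⪯ Cov(ν)`. -/
theorem statement_6 {n : ℕ} (J C : Matrix (Fin n) (Fin n) ℝ) (h : Fin n → ℝ)
    (hJ : J.IsSymm) (hC : C.PosDef) :
    (∀ σ : Fin n → Bool,
      ising J h σ =
        ∫ z : Fin n → ℝ, ising (J - C) (C.mulVec z + h) σ * hsDensity J C h z) ∧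
    (covDens (hsDensity J C h) - covMat (ising J h)).PosSemidef := by
  set K := ∫ z : Fin n → ℝ, HSaux.g C z with hKdef
  set Z := isingZ J h with hZdef
  set N := ∫ z : Fin n → ℝ, hsWeight J C h z with hNdef
  have hK : 0 < K := HSaux.K_pos hC
  have hZ : 0 < Z := HSaux.isingZ_pos J h
  have hN : N = Z * K := HSaux.hsWeight_integral hC J h
  have hN0 : 0 < N := hN ▸ mul_pos hZ hK
  have hdens : ∀ z, hsDensity J C h z = hsWeight J C h z / N := fun z => rfl
  constructor
  · -- part 1: the mixture identity
    intro σ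
    have hpt : ∀ z : Fin n → ℝ, ising (J - C) (C.mulVec z + h) σ * hsDensity J C h z
        = (isingWeight J h σ / N) * HSaux.g C (z - toVec σ) := by
      intro z
      rw [hdens, HSaux.hsWeight_gz J h z]
      have hZ' : isingZ (J - C) (C.mulVec z + h) ≠ 0 :=
        (HSaux.isingZ_pos (J - C) (C.mulVec z + h)).ne'
      unfold ising
      calc isingWeight (J - C) (C.mulVec z + h) σ / isingZ (J - C) (C.mulVec z + h) *
            (HSaux.g C z * isingZ (J - C) (C.mulVec z + h) / N)
          = (isingWeight (J - C) (C.mulVec z + h) σ * HSaux.g C z) *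
              (isingZ (J - C) (C.mulVec z + h) / isingZ (J - C) (C.mulVec z + h)) / N := by
            ring
        _ = (isingWeight J h σ * HSaux.g C (z - toVec σ)) / N := by
            rw [div_self hZ', mul_one, HSaux.weight_id hC J h σ z]
        _ = (isingWeight J h σ / N) * HSaux.g C (z - toVec σ) := by ring
    rw [integral_congr_ae (Filter.Eventually.of_forall hpt), integral_const_mul,
      (HSaux.shift0 hC (toVec σ)).2, ← hKdef, hN]
    unfold ising
    rw [← hZdef]
    field_simp
  · -- part 2: covariance domination
    have m1 : ∀ i, (∫ z : Fin n → ℝ, hsDensity J C h z * z i)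
        = ∑ σ : Fin n → Bool, ising J h σ * toVec σ i := by
      intro i
      have he : ∀ z : Fin n → ℝ, hsDensity J C h z * z i = (hsWeight J C h z * z i) / N :=
        fun z => by rw [hdens]; ring
      have hsum : ∑ σ : Fin n → Bool, ising J h σ * toVec σ i
          = (∑ σ : Fin n → Bool, isingWeight J h σ * toVec σ i) / Z := by
        rw [Finset.sum_div]
        exact Finset.sum_congr rfl fun σ _ => by unfold ising; rw [← hZdef]; ring
      rw [integral_congr_ae (Filter.Eventually.of_forall he), integral_div,
        HSaux.hsWeight_mom1 hC J h i, ← hKdef, hN, hsum]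
      field_simp
    have m2 : ∀ i j, (∫ z : Fin n → ℝ, hsDensity J C h z * (z i * z j))
        = (∑ σ : Fin n → Bool, ising J h σ * (toVec σ i * toVec σ j))
          + (∫ z : Fin n → ℝ, z i * z j * HSaux.g C z) / K := by
      intro i j
      have he : ∀ z : Fin n → ℝ, hsDensity J C h z * (z i * z j)
          = (hsWeight J C h z * (z i * z j)) / N := fun z => by rw [hdens]; ring
      have hsum : ∑ σ : Fin n → Bool, ising J h σ * (toVec σ i * toVec σ j)
          = (∑ σ : Fin n → Bool, isingWeight J h σ * (toVec σ i * toVec σ j)) / Z := by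
        rw [Finset.sum_div]
        exact Finset.sum_congr rfl fun σ _ => by unfold ising; rw [← hZdef]; ring
      rw [integral_congr_ae (Filter.Eventually.of_forall he), integral_div,
        HSaux.hsWeight_mom2 hC J h i j, ← hKdef, ← hZdef, hN, hsum]
      field_simp
    have hdiff : ∀ i j, (covDens (hsDensity J C h) - covMat (ising J h)) i j
        = (∫ z : Fin n → ℝ, z i * z j * HSaux.g C z) / K := by
      intro i j
      rw [Matrix.sub_apply]
      unfold covDens covMat
      rw [m2 i j, m1 i, m1 j]
      ring
    refine Matrix.posSemidef_iff_dotProduct_mulVec.mpr ⟨?_, ?_⟩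
    · -- Hermitian
      apply Matrix.ext
      intro i j
      rw [Matrix.conjTranspose_apply, hdiff j i, hdiff i j, HSaux.Msymm C j i]
      exact star_trivial _
    · -- nonnegativity
      intro x
      have hstar : star x = x := by
        funext i
        exact star_trivial _
      rw [hstar]
      have hdot : dotProduct x (Matrix.mulVec (covDens (hsDensity J C h) - covMat (ising J h)) x)
          = (∑ i, ∑ j, x i * (∫ z : Fin n → ℝ, z i * z j * HSaux.g C z) * x j) / K := by
        simp only [dotProduct, Matrix.mulVec]
        rw [Finset.sum_div]
        refine Finset.sum_congr rfl fun i _ => ?_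
        rw [Finset.mul_sum, Finset.sum_div]
        refine Finset.sum_congr rfl fun j _ => ?_
        rw [hdiff i j]
        ring
      rw [hdot]
      exact div_nonneg (HSaux.Mpsd hC x) hK.le


end
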